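/- On the elliptic curve W_R over ℚ(t) given by y² = x³ + (1−2t)x² + t²x, the point P = (t, t) is a ℚ(t)-rational point satisfying 2P = (0,0), and P has order exactly 4 in the group of ℚ(t)-rational points. (This is the 4-torsion section generating the Mordell–Weil group ℤ/4ℤ of the rational elliptic surface R.) -/

import Mathlib

/-!
The line `y = x` meets `y² = x³ + (1 - 2t)x² + t²x` where `x (x - t)² = 0`, so it is tangent at
`P = (t, t)` and passes through `T = (0, 0)`. Hence `2P = -T = T`, and `T` has order `2` since it
lies on `y = 0`; so `P` has order `4`.
-/

/-- `W_R`: the Weierstrass curve `y² = x³ + (1 - 2t)x² + t²x` over `ℚ(t)`,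
a Weierstrass model of the extremal rational elliptic surface `R`. -/
noncomputable def WR : WeierstrassCurve (RatFunc ℚ) :=
  ⟨0, 1 - 2 * RatFunc.X, 0, RatFunc.X ^ 2, 0⟩

lemma addOrderOf_eq_four_of_two_nsmul {G : Type*} [AddMonoid G] {P T : G} (hP : 2 • P = T)
    (hT : addOrderOf T = 2) : addOrderOf P = 4 := by
  have hT0 : T ≠ 0 := by rintro rfl; simp at hT
  exact addOrderOf_eq_prime_pow (p := 2) (n := 1) (by rwa [pow_one, hP])
    (by rw [pow_two, mul_nsmul', hP, ← hT, addOrderOf_nsmul_eq_zero])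

open WeierstrassCurve.Affine

namespace WeierstrassCurve

lemma Affine.Point.addOrderOf_some_of_Y_eq {F : Type*} [Field F] [DecidableEq F]
    {W : Affine F} {x y : F} (h : W.Nonsingular x y) (hy : y = W.negY x y) :
    addOrderOf (Point.some x y h) = 2 :=
  addOrderOf_eq_prime (by rw [two_nsmul, Point.add_self_of_Y_eq hy]) (Point.some_ne_zero h)

variable {F : Type*} [Field F] {t : F}

def weierstrassR (t : F) : WeierstrassCurve F := ⟨0, 1 - 2 * t, 0, t ^ 2, 0⟩

lemma WR_eq_weierstrassR : WR = weierstrassR RatFunc.X := rfl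

namespace weierstrassR

@[simp]
lemma negY_eq (x y : F) : (weierstrassR t).toAffine.negY x y = -y := by
  simp [Affine.negY, weierstrassR]

lemma nonsingular_zero (ht : t ≠ 0) : (weierstrassR t).toAffine.Nonsingular 0 0 :=
  Affine.nonsingular_zero.mpr ⟨rfl, .inr (pow_ne_zero 2 ht)⟩

lemma addOrderOf_some_zero [DecidableEq F] (ht : t ≠ 0) :
    addOrderOf (Point.some 0 0 (nonsingular_zero ht)) = 2 :=
  Point.addOrderOf_some_of_Y_eq _ (by rw [negY_eq, neg_zero])

variable [NeZero (2 : F)]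

lemma nonsingular_self (ht : t ≠ 0) : (weierstrassR t).toAffine.Nonsingular t t := by
  rw [nonsingular_iff', equation_iff]
  refine ⟨by simp only [weierstrassR]; ring, .inr ?_⟩
  simpa [weierstrassR] using mul_ne_zero two_ne_zero ht

lemma self_ne_negY (ht : t ≠ 0) : t ≠ (weierstrassR t).toAffine.negY t t := by
  rw [negY_eq, ne_eq, ← sub_eq_zero, sub_neg_eq_add, ← two_mul]
  exact mul_ne_zero two_ne_zero ht

variable [DecidableEq F]

lemma slope_self (ht : t ≠ 0) : (weierstrassR t).toAffine.slope t t t t = 1 := by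
  rw [slope_of_Y_ne rfl (self_ne_negY ht), div_eq_one_iff_eq (sub_ne_zero.mpr (self_ne_negY ht)),
    negY_eq]
  simp only [weierstrassR]
  ring

lemma two_nsmul_some_self (ht : t ≠ 0) :
    2 • Point.some t t (nonsingular_self ht) = Point.some 0 0 (nonsingular_zero ht) := by
  rw [two_nsmul, Point.add_self_of_Y_ne (self_ne_negY ht)]
  congr 1 <;> simp only [addY, negAddY, addX, slope_self ht, negY_eq] <;> simp [weierstrassR] <;> ring

lemma addOrderOf_some_self (ht : t ≠ 0) : addOrderOf (Point.some t t (nonsingular_self ht)) = 4 :=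
  addOrderOf_eq_four_of_two_nsmul (two_nsmul_some_self ht) (addOrderOf_some_zero ht)

end weierstrassR

end WeierstrassCurve

open Classical in
/-- On the elliptic curve `W_R : y² = x³ + (1 - 2t)x² + t²x` over `ℚ(t)`, the point
`P = (t, t)` is a rational point satisfying `2P = (0, 0)`, and `P` has order exactly `4`
in the group of `ℚ(t)`-rational points. -/
theorem stmt6 :
    ∃ (h : WR.toAffine.Nonsingular RatFunc.X RatFunc.X)
      (h0 : WR.toAffine.Nonsingular 0 0),
      2 • (WeierstrassCurve.Affine.Point.some _ _ h) = WeierstrassCurve.Affine.Point.some _ _ h0 ∧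
      addOrderOf (WeierstrassCurve.Affine.Point.some _ _ h) = 4 := by
  rw [WeierstrassCurve.WR_eq_weierstrassR]
  have ht : (RatFunc.X : RatFunc ℚ) ≠ 0 := RatFunc.X_ne_zero
  open WeierstrassCurve.weierstrassR in
  exact ⟨nonsingular_self ht, nonsingular_zero ht, two_nsmul_some_self ht, addOrderOf_some_self ht⟩
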